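/- With ℰ_v(n,k) as defined, for every v ≥ 0 and n ≥ 1 one has ℰ_v(n,0) = (Γ(v-3/2) Γ(v+3/2)) / ((2v+1)! · 2^{v+1} · π) · 𝒫_v(8n - 1), where 𝒫_v(x) = Σ_{r=0}^{v} (-1)^r C(2v+1,2r) (2r-3)(2r-1) x^r. -/

import Mathlib

/-- The quantity `ℰ_v(n,k)` from the paper:
`Σ_{r+s=v} ((-1)^r/8^v) Γ(v-3/2)Γ(v+3/2)/(s! r! Γ(r-3/2) Γ(s+3/2))
   (2k+1)^{2s+1} (8n-(2k+1)²)^r`. -/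
noncomputable def Ecal (v n k : ℕ) : ℝ :=
  ∑ r ∈ Finset.range (v + 1),
    ((-1 : ℝ) ^ r / 8 ^ v) *
      (Real.Gamma ((v : ℝ) - 3 / 2) * Real.Gamma ((v : ℝ) + 3 / 2)) /
      ((Nat.factorial (v - r) : ℝ) * (Nat.factorial r : ℝ) *
        Real.Gamma ((r : ℝ) - 3 / 2) * Real.Gamma (((v - r : ℕ) : ℝ) + 3 / 2)) *
      (2 * (k : ℝ) + 1) ^ (2 * (v - r) + 1) *
      (8 * (n : ℝ) - (2 * (k : ℝ) + 1) ^ 2) ^ r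

/-!
With `k = 0` the factor `(2k+1)^{2s+1}` is `1`, so it suffices to match the sums termwise.
Legendre's duplication formula gives `r! Γ(r + 1/2) = (2r)! √π / 4^r`, hence `s! Γ(s + 3/2)`
and `r! Γ(r - 3/2) (2r-3)(2r-1)` are rational multiples of `√π`. Their product is
`(2r)! (2s+1)! π` up to a power of `2`, and `1 / ((2r)! (2s+1)!) = C(2v+1, 2r) / (2v+1)!`.
-/

open Nat

lemma two_mul_natCast_sub_one_ne_zero (r : ℕ) : 2 * (r : ℝ) - 1 ≠ 0 :=
  sub_ne_zero.2 (by exact_mod_cast (by omega : 2 * r ≠ 1))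

lemma two_mul_natCast_sub_three_ne_zero (r : ℕ) : 2 * (r : ℝ) - 3 ≠ 0 :=
  sub_ne_zero.2 (by exact_mod_cast (by omega : 2 * r ≠ 3))

namespace Real

lemma Gamma_nat_add_half_mul_factorial (r : ℕ) :
    Gamma (r + 1 / 2) * r ! = (2 * r)! * √π / 4 ^ r := by
  have h := Gamma_mul_Gamma_add_half (r + 1 / 2)
  rw [show (r : ℝ) + 1 / 2 + 1 / 2 = r + 1 by ring, Gamma_nat_eq_factorial,
    show 2 * ((r : ℝ) + 1 / 2) = (2 * r : ℕ) + 1 by push_cast; ring, Gamma_nat_eq_factorial,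
    show (1 : ℝ) - ((2 * r : ℕ) + 1) = -(2 * r : ℕ) by ring, rpow_neg zero_le_two, rpow_natCast,
    pow_mul] at h
  rw [h]
  norm_num
  ring

lemma Gamma_nat_add_three_halves_mul_factorial (s : ℕ) :
    Gamma (s + 3 / 2) * s ! = (2 * s + 1)! * √π / (2 * 4 ^ s) := by
  rw [show (s : ℝ) + 3 / 2 = s + 1 / 2 + 1 by ring, Gamma_add_one (by positivity), mul_assoc,
    Gamma_nat_add_half_mul_factorial, factorial_succ]
  push_cast
  field_simp

lemma Gamma_nat_sub_three_halves_mul_factorial (r : ℕ) :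
    Gamma (r - 3 / 2) * ((2 * r - 3) * (2 * r - 1)) * r ! = 4 * (2 * r)! * √π / 4 ^ r := by
  have h := Gamma_nat_add_half_mul_factorial r
  rw [show (r : ℝ) + 1 / 2 = r - 3 / 2 + 1 + 1 by ring,
    Gamma_add_one fun h => two_mul_natCast_sub_one_ne_zero r (by linarith),
    Gamma_add_one fun h => two_mul_natCast_sub_three_ne_zero r (by linarith)] at h
  linear_combination 4 * h

end Real

open Real

lemma factorial_mul_factorial_mul_Gamma_mul_Gamma (r s : ℕ) :
    (s ! * r ! * Gamma (r - 3 / 2) * Gamma (s + 3 / 2) : ℝ) =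
      2 * (2 * r)! * (2 * s + 1)! * π / (4 ^ (r + s) * ((2 * r - 3) * (2 * r - 1))) := by
  have := two_mul_natCast_sub_three_ne_zero r
  have := two_mul_natCast_sub_one_ne_zero r
  have hr := Gamma_nat_sub_three_halves_mul_factorial r
  have hs := Gamma_nat_add_three_halves_mul_factorial s
  rw [eq_div_iff (by positivity)]
  rw [eq_div_iff (by positivity)] at hr hs
  linear_combination (s ! * Gamma (s + 3 / 2) * 4 ^ s) * hr + (2 * (2 * r)! * √π) * hs
    + 2 * (2 * r)! * (2 * s + 1)! * sq_sqrt pi_nonneg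

open Real in
theorem Ecal_n_zero_eq_general (v : ℕ) (n : ℕ) :
    Ecal v n 0 =
      Real.Gamma ((v : ℝ) - 3 / 2) * Real.Gamma ((v : ℝ) + 3 / 2) /
        ((Nat.factorial (2 * v + 1) : ℝ) * 2 ^ (v + 1) * π) *
      ∑ r ∈ Finset.range (v + 1),
        (-1 : ℝ) ^ r * (Nat.choose (2 * v + 1) (2 * r) : ℝ) *
          (2 * (r : ℝ) - 3) * (2 * (r : ℝ) - 1) * (8 * (n : ℝ) - 1) ^ r := by
  rw [Ecal, Finset.mul_sum]
  refine Finset.sum_congr rfl fun r hr => ?_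
  obtain ⟨s, rfl⟩ := Nat.exists_eq_add_of_le (Finset.mem_range_succ_iff.1 hr)
  rw [Nat.add_sub_cancel_left, factorial_mul_factorial_mul_Gamma_mul_Gamma,
    Nat.cast_choose ℝ (by omega : 2 * r ≤ 2 * (r + s) + 1),
    show 2 * (r + s) + 1 - 2 * r = 2 * s + 1 by omega,
    show (8 : ℝ) ^ (r + s) = 4 ^ (r + s) * 2 ^ (r + s) by rw [← mul_pow]; norm_num]
  have := two_mul_natCast_sub_three_ne_zero r
  have := two_mul_natCast_sub_one_ne_zero r
  field_simp
  ring

open Real in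
theorem Ecal_n_zero_eq (v : ℕ) (n : ℕ) (hn : 1 ≤ n) :
    Ecal v n 0 =
      Real.Gamma ((v : ℝ) - 3 / 2) * Real.Gamma ((v : ℝ) + 3 / 2) /
        ((Nat.factorial (2 * v + 1) : ℝ) * 2 ^ (v + 1) * π) *
      ∑ r ∈ Finset.range (v + 1),
        (-1 : ℝ) ^ r * (Nat.choose (2 * v + 1) (2 * r) : ℝ) *
          (2 * (r : ℝ) - 3) * (2 * (r : ℝ) - 1) * (8 * (n : ℝ) - 1) ^ r :=
  Ecal_n_zero_eq_general v n
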